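/- arXiv:2410.18422 — 2 statements merged into one kernel-verified Lean document; each statement's English description precedes it below -/
import Mathlib

section
/- (Trapped Boundary Lemma) Let Ω⁺ ⊂ ℝ² be a Jordan domain, Ω⁻ = ℝ² \ closure(Ω⁺), and Γ = ∂Ω⁺ = ∂Ω⁻. Fix α ∈ (0,1) and C₀ > 0, and suppose there exists r₀ > 0 such that ε(x,r) ≤ C₀·r^α for all x ∈ Γ and all 0 < r ≤ r₀. Fix x ∈ Γ and 0 < t ≤ r₀. Then for any two points v, w ∈ ∂B(x,t) ∩ Γ, the shortest arc arc_{x,t}(v,w) on the circle ∂B(x,t) with endpoints v and w satisfies H¹(arc_{x,t}(v,w)) ∈ [0, 2C₀·t^{α+1}] ∪ [πt − C₀·t^{α+1}, πt]. -/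
open Set Metric MeasureTheory

noncomputable section

abbrev E2 := EuclideanSpace ℝ (Fin 2)

/-- The point on the circle of center `x` and radius `r` at angle `t`. -/
def circlePt (x : E2) (r t : ℝ) : E2 :=
  x + r • (EuclideanSpace.equiv (Fin 2) ℝ).symm ![Real.cos t, Real.sin t]

/-- `A` is an open arc of the circle `∂B(x,r)`. -/
def IsOpenArc (x : E2) (r : ℝ) (A : Set E2) : Prop :=
  ∃ a b : ℝ, a < b ∧ b - a ≤ 2 * Real.pi ∧ A = circlePt x r '' Set.Ioo a b

/-- The `H¹`-measure of the largest open arc of `∂B(x,r)` contained in `Ω`. -/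
def maxArcMeasure (Ω : Set E2) (x : E2) (r : ℝ) : ℝ :=
  (⨆ A ∈ {A | IsOpenArc x r A ∧ A ⊆ Ω}, μH[1] A).toReal

/-- The Carleson ε-function of the Jordan domain `Ω⁺`, where `Ω⁻ = ℝ² \ closure Ω⁺`. -/
def carlesonEps (Ω : Set E2) (x : E2) (r : ℝ) : ℝ :=
  (1 / r) * max |Real.pi * r - maxArcMeasure Ω x r|
      |Real.pi * r - maxArcMeasure ((closure Ω)ᶜ) x r|

/-- `Γ` is a Jordan curve: the image of a continuous injective map of the unit circle. -/
def IsJordanCurve (Γ : Set E2) : Prop :=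
  ∃ f : Metric.sphere (0 : ℝ × ℝ) 1 → E2,
    Continuous f ∧ Function.Injective f ∧ Set.range f = Γ

/-- A Jordan domain: an open connected set whose boundary is a Jordan curve. -/
def IsJordanDomain (Ω : Set E2) : Prop :=
  IsOpen Ω ∧ IsConnected Ω ∧ IsJordanCurve (frontier Ω)

/-- An affine line in the plane. -/
def IsAffineLine (L : Set E2) : Prop :=
  ∃ p v : E2, v ≠ 0 ∧ L = {y | ∃ t : ℝ, y = p + t • v}

/-- The (smaller) angle between the lines spanned by `u` and `v`, an element of `[0, π/2]`. -/
def lineAngle (u v : E2) : ℝ :=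
  min (InnerProductGeometry.angle u v) (Real.pi - InnerProductGeometry.angle u v)

/-!
Parametrise `∂B(x,t)` starting from `v`, so that `w` sits at some parameter `d ∈ [0, 2π]` and
`∠(v - x, w - x) = min d (2π - d)`. For any `η > 0` the Carleson bound provides arcs of `∂B(x,t)`
inside `Ω⁺` and inside `Ω⁻` of length `πt - C₀t^{α+1} - η`. They are disjoint and avoid
`v, w ∈ Γ`, so each lies in one of the two arcs into which `v` and `w` cut the circle. If they lie
in different ones, the shortest arc from `v` to `w` is at least as long as the shorter of them; if
they lie in the same one, the other arc has length at most `2πt` minus the sum of their lengths,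
i.e. `2C₀t^{α+1} + 2η`.
-/

open Real InnerProductGeometry

lemma min_le_min_or_min_le_of_disjoint_Ioo {p d a₁ b₁ a₂ b₂ : ℝ} (hd : d ∈ Icc 0 p)
    (ha₁ : 0 ≤ a₁) (hb₁ : b₁ ≤ p) (ha₂ : 0 ≤ a₂) (hb₂ : b₂ ≤ p)
    (hd₁ : d ∉ Ioo a₁ b₁) (hd₂ : d ∉ Ioo a₂ b₂) (hdisj : Disjoint (Ioo a₁ b₁) (Ioo a₂ b₂)) :
    min (b₁ - a₁) (b₂ - a₂) ≤ min d (p - d) ∨ min d (p - d) ≤ p - (b₁ - a₁) - (b₂ - a₂) := by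
  rw [mem_Ioo, not_and_or, not_lt, not_lt] at hd₁ hd₂
  rw [Ioo_disjoint_Ioo, min_le_iff, le_max_iff, le_max_iff] at hdisj
  obtain ⟨hd0, hdp⟩ := hd
  -- each interval is empty or lies in `[0, d]` or in `[d, p]`
  rcases hd₁ with h₁ | h₁ <;> rcases hd₂ with h₂ | h₂ <;> rcases hdisj with (h | h) | (h | h) <;>
    first
    | exact .inl (le_min (min_le_of_left_le (by linarith)) (min_le_of_left_le (by linarith)))
    | exact .inl (le_min (min_le_of_right_le (by linarith)) (min_le_of_right_le (by linarith)))
    | exact .inl (min_le_min (by linarith) (by linarith))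
    | exact .inl ((min_comm _ _).trans_le (min_le_min (by linarith) (by linarith)))
    | exact .inr (min_le_of_left_le (by linarith))
    | exact .inr (min_le_of_right_le (by linarith))

namespace Function.Periodic

variable {α : Type*} {f : ℝ → α} {p : ℝ}

lemma exists_image_Ioo_eq (hf : Periodic f p) (hp : 0 < p) (φ a b : ℝ) :
    ∃ a' ∈ Ico 0 p, f '' Ioo a b = (fun s => f (φ + s)) '' Ioo a' (a' + (b - a)) := by
  refine ⟨toIcoMod hp 0 (a - φ), toIcoMod_mem_Ico' hp _, ?_⟩
  have hshift : (fun s => f (φ + s)) = f ∘ (· + (φ + toIcoDiv hp 0 (a - φ) • p)) := by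
    ext s
    rw [Function.comp_apply, ← add_assoc, add_comm s, hf.zsmul]
  rw [hshift, image_comp, image_add_const_Ioo, ← self_sub_toIcoDiv_zsmul]
  congr 2 <;> abel

lemma exists_Ioo_of_notMem_image (hf : Periodic f p) (hp : 0 < p) {φ d a b : ℝ}
    (hφ : f φ ∉ f '' Ioo a b) (hd : f (φ + d) ∉ f '' Ioo a b) :
    ∃ a', 0 ≤ a' ∧ a' + (b - a) ≤ p ∧ d ∉ Ioo a' (a' + (b - a)) ∧
      f '' Ioo a b = (fun s => f (φ + s)) '' Ioo a' (a' + (b - a)) := by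
  obtain ⟨a', ha', himage⟩ := hf.exists_image_Ioo_eq hp φ a b
  rw [himage] at hφ hd
  refine ⟨a', ha'.1, ?_, fun hd' => hd (mem_image_of_mem _ hd'), himage⟩
  by_contra! hlt
  rw [← hf φ] at hφ
  exact hφ (mem_image_of_mem _ ⟨ha'.2, hlt⟩)

lemma min_le_min_or_min_le_of_disjoint_image (hf : Periodic f p) (hp : 0 < p)
    {φ d a₁ b₁ a₂ b₂ : ℝ} (hd : d ∈ Icc 0 p) (hdisj : Disjoint (f '' Ioo a₁ b₁) (f '' Ioo a₂ b₂))
    (hφ₁ : f φ ∉ f '' Ioo a₁ b₁) (hd₁ : f (φ + d) ∉ f '' Ioo a₁ b₁)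
    (hφ₂ : f φ ∉ f '' Ioo a₂ b₂) (hd₂ : f (φ + d) ∉ f '' Ioo a₂ b₂) :
    min (b₁ - a₁) (b₂ - a₂) ≤ min d (p - d) ∨ min d (p - d) ≤ p - (b₁ - a₁) - (b₂ - a₂) := by
  obtain ⟨a₁', ha₁, hb₁, hd₁', himage₁⟩ := hf.exists_Ioo_of_notMem_image hp hφ₁ hd₁
  obtain ⟨a₂', ha₂, hb₂, hd₂', himage₂⟩ := hf.exists_Ioo_of_notMem_image hp hφ₂ hd₂
  rw [himage₁, himage₂] at hdisj
  simpa only [add_sub_cancel_left] using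
    min_le_min_or_min_le_of_disjoint_Ioo hd ha₁ hb₁ ha₂ hb₂ hd₁' hd₂' hdisj.of_image

end Function.Periodic

lemma eq_min_two_pi_sub_of_cos_eq {θ d : ℝ} (hθ : θ ∈ Icc 0 π) (hd : d ∈ Icc 0 (2 * π))
    (hcos : cos θ = cos d) : θ = min d (2 * π - d) := by
  rcases le_total d π with hdπ | hπd
  · rw [min_eq_left (by linarith)]
    exact injOn_cos hθ ⟨hd.1, hdπ⟩ hcos
  · rw [min_eq_right (by linarith)]
    exact injOn_cos hθ ⟨by linarith [hd.2], by linarith⟩ (hcos.trans (cos_two_pi_sub d).symm)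

section Circle

open Complex (orthonormalBasisOneI)

variable (x : E2) (r : ℝ)

lemma circlePt_eq_repr_circleMap :
    circlePt x r = orthonormalBasisOneI.repr ∘ circleMap (orthonormalBasisOneI.repr.symm x) r := by
  ext φ i
  fin_cases i <;> simp [circlePt, circleMap, EuclideanSpace.equiv, Complex.exp_mul_I,
    ← Complex.ofReal_cos, ← Complex.ofReal_sin]

lemma circlePt_sub_self (φ : ℝ) :
    circlePt x r φ - x = orthonormalBasisOneI.repr (circleMap 0 r φ) := by
  rw [circlePt_eq_repr_circleMap, Function.comp_apply, ← circleMap_sub_center, map_sub,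
    LinearIsometryEquiv.apply_symm_apply]

lemma periodic_circlePt : Function.Periodic (circlePt x r) (2 * π) := by
  rw [circlePt_eq_repr_circleMap]
  exact (periodic_circleMap _ r).comp _

lemma range_circlePt : range (circlePt x r) = sphere x |r| := by
  rw [circlePt_eq_repr_circleMap, range_comp, range_circleMap,
    LinearIsometryEquiv.image_sphere, LinearIsometryEquiv.apply_symm_apply]

lemma lipschitzWith_circlePt : LipschitzWith (nnabs r) (circlePt x r) := by
  rw [circlePt_eq_repr_circleMap]
  simpa using orthonormalBasisOneI.repr.lipschitz.comp (lipschitzWith_circleMap _ r)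

lemma hausdorffMeasure_circlePt_image_Ioo_le (a b : ℝ) :
    μH[1] (circlePt x r '' Ioo a b) ≤ ENNReal.ofReal (|r| * (b - a)) := by
  refine ((lipschitzWith_circlePt x r).hausdorffMeasure_image_le zero_le_one _).trans_eq ?_
  rw [hausdorffMeasure_real, volume_Ioo, ENNReal.rpow_one, ENNReal.ofReal_mul (abs_nonneg r),
    ← toNNReal_abs]
  rfl

lemma cos_angle_circlePt_sub (hr : r ≠ 0) (φ ψ : ℝ) :
    cos (angle (circlePt x r φ - x) (circlePt x r ψ - x)) = cos (φ - ψ) := by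
  rw [circlePt_sub_self, circlePt_sub_self, ← LinearIsometryEquiv.coe_toLinearIsometry,
    LinearIsometry.angle_map, circleMap_zero, circleMap_zero,
    Complex.angle_mul_left (by exact_mod_cast hr), Complex.angle_exp_exp, cos_abs,
    ← self_sub_toIocDiv_zsmul, zsmul_eq_mul, cos_sub_int_mul_two_pi]

lemma angle_circlePt_sub_add (hr : r ≠ 0) (φ : ℝ) {d : ℝ} (hd : d ∈ Icc 0 (2 * π)) :
    angle (circlePt x r φ - x) (circlePt x r (φ + d) - x) = min d (2 * π - d) := by
  refine eq_min_two_pi_sub_of_cos_eq ⟨angle_nonneg _ _, angle_le_pi _ _⟩ hd ?_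
  rw [cos_angle_circlePt_sub x r hr, sub_add_cancel_left, cos_neg]

end Circle

lemma min_le_angle_or_angle_le_of_disjoint_arcs {x v w : E2} {r : ℝ} (hr : 0 < r)
    (hv : v ∈ sphere x r) (hw : w ∈ sphere x r) {a₁ b₁ a₂ b₂ : ℝ}
    (hdisj : Disjoint (circlePt x r '' Ioo a₁ b₁) (circlePt x r '' Ioo a₂ b₂))
    (hv₁ : v ∉ circlePt x r '' Ioo a₁ b₁) (hw₁ : w ∉ circlePt x r '' Ioo a₁ b₁)
    (hv₂ : v ∉ circlePt x r '' Ioo a₂ b₂) (hw₂ : w ∉ circlePt x r '' Ioo a₂ b₂) :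
    min (b₁ - a₁) (b₂ - a₂) ≤ angle (v - x) (w - x) ∨
      angle (v - x) (w - x) ≤ 2 * π - (b₁ - a₁) - (b₂ - a₂) := by
  have hsphere : sphere x r = range (circlePt x r) := by rw [range_circlePt, abs_of_pos hr]
  obtain ⟨φ, rfl⟩ : v ∈ range (circlePt x r) := hsphere ▸ hv
  obtain ⟨ψ, rfl⟩ : w ∈ range (circlePt x r) := hsphere ▸ hw
  obtain ⟨d, hd, hψ⟩ : ∃ d ∈ Icc 0 (2 * π), circlePt x r ψ = circlePt x r (φ + d) := by
    refine ⟨toIcoMod two_pi_pos 0 (ψ - φ), ?_, ?_⟩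
    · simpa using Ico_subset_Icc_self (toIcoMod_mem_Ico' two_pi_pos (ψ - φ))
    · rw [← self_sub_toIcoDiv_zsmul, add_sub, add_sub_cancel, (periodic_circlePt x r).sub_zsmul_eq]
  rw [hψ] at hw₁ hw₂ ⊢
  rw [angle_circlePt_sub_add x r hr.ne' φ hd]
  exact (periodic_circlePt x r).min_le_min_or_min_le_of_disjoint_image two_pi_pos hd hdisj
    hv₁ hw₁ hv₂ hw₂

lemma exists_arc_subset_of_lt_maxArcMeasure {Ω : Set E2} {x : E2} {r c : ℝ} (hc : 0 ≤ c)
    (h : c < maxArcMeasure Ω x r) :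
    ∃ a b, circlePt x r '' Ioo a b ⊆ Ω ∧ c < |r| * (b - a) := by
  unfold maxArcMeasure at h
  have hne : (⨆ A ∈ {A | IsOpenArc x r A ∧ A ⊆ Ω}, μH[1] A) ≠ ⊤ := by
    intro htop
    rw [htop, ENNReal.toReal_top] at h
    linarith
  rw [← ENNReal.ofReal_lt_iff_lt_toReal hc hne, lt_biSup_iff] at h
  obtain ⟨_, ⟨⟨a, b, -, -, rfl⟩, hsub⟩, hlt⟩ := h
  exact ⟨a, b, hsub, (ENNReal.ofReal_lt_ofReal_iff'.1
    (hlt.trans_le (hausdorffMeasure_circlePt_image_Ioo_le x r a b))).1⟩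

lemma le_mul_angle_or_mul_angle_le_of_le_maxArcMeasure {Ω₁ Ω₂ : Set E2} {x v w : E2} {r c : ℝ}
    (hr : 0 < r) (hv : v ∈ sphere x r) (hw : w ∈ sphere x r) (hdisj : Disjoint Ω₁ Ω₂)
    (hv₁ : v ∉ Ω₁) (hw₁ : w ∉ Ω₁) (hv₂ : v ∉ Ω₂) (hw₂ : w ∉ Ω₂)
    (hc₁ : c ≤ maxArcMeasure Ω₁ x r) (hc₂ : c ≤ maxArcMeasure Ω₂ x r) :
    c ≤ r * angle (v - x) (w - x) ∨ r * angle (v - x) (w - x) ≤ 2 * (π * r - c) := by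
  set θ := angle (v - x) (w - x)
  refine or_iff_not_imp_left.2 fun hθc => le_of_forall_pos_lt_add fun η hη => ?_
  rw [not_le] at hθc
  -- arcs longer than `r * θ` cannot fit between `v` and `w` along the shortest arc
  set c' := max (r * θ) (c - η / 2)
  have hc' : 0 ≤ c' := le_max_of_le_left (mul_nonneg hr.le (angle_nonneg _ _))
  have hc'c : c' < c := max_lt hθc (by linarith)
  obtain ⟨a₁, b₁, hsub₁, hlt₁⟩ := exists_arc_subset_of_lt_maxArcMeasure hc' (hc'c.trans_le hc₁)
  obtain ⟨a₂, b₂, hsub₂, hlt₂⟩ := exists_arc_subset_of_lt_maxArcMeasure hc' (hc'c.trans_le hc₂)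
  rw [abs_of_pos hr] at hlt₁ hlt₂
  have hθc' : r * θ ≤ c' := le_max_left _ _
  have hηc' : c - η / 2 ≤ c' := le_max_right _ _
  rcases min_le_angle_or_angle_le_of_disjoint_arcs hr hv hw (hdisj.mono hsub₁ hsub₂)
    (fun h => hv₁ (hsub₁ h)) (fun h => hw₁ (hsub₁ h))
    (fun h => hv₂ (hsub₂ h)) (fun h => hw₂ (hsub₂ h)) with h | h
  · exfalso
    rcases min_le_iff.1 h with h | h <;> nlinarith
  · nlinarith

lemma pi_mul_sub_le_maxArcMeasure (Ω : Set E2) (x : E2) {r : ℝ} (hr : 0 < r) :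
    π * r - r * carlesonEps Ω x r ≤ maxArcMeasure Ω x r ∧
      π * r - r * carlesonEps Ω x r ≤ maxArcMeasure (closure Ω)ᶜ x r := by
  rw [carlesonEps, ← mul_assoc, mul_one_div_cancel hr.ne', one_mul]
  set Mint := maxArcMeasure Ω x r
  set Mext := maxArcMeasure (closure Ω)ᶜ x r
  exact ⟨by linarith [le_abs_self (π * r - Mint), le_max_left |π * r - Mint| |π * r - Mext|],
    by linarith [le_abs_self (π * r - Mext), le_max_right |π * r - Mint| |π * r - Mext|]⟩

/-- The shortest arc of `∂B(x,t)` joining `v` and `w` has length `t * ∠(v - x, w - x)`. -/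
theorem trapped_boundary_general (Ωp : Set E2) (hΩ : IsJordanDomain Ωp)
    (Γ : Set E2) (hΓp : Γ = frontier Ωp)
    (α C₀ : ℝ) (r₀ : ℝ)
    (hε : ∀ x ∈ Γ, ∀ r : ℝ, 0 < r → r ≤ r₀ → carlesonEps Ωp x r ≤ C₀ * r ^ α)
    (x : E2) (hx : x ∈ Γ) (t : ℝ) (ht : 0 < t) (ht' : t ≤ r₀)
    (v w : E2) (hv : v ∈ Metric.sphere x t ∩ Γ) (hw : w ∈ Metric.sphere x t ∩ Γ) :
    t * InnerProductGeometry.angle (v - x) (w - x) ∈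
      Set.Icc 0 (2 * C₀ * t ^ (α + 1)) ∪
        Set.Icc (Real.pi * t - C₀ * t ^ (α + 1)) (Real.pi * t) := by
  subst hΓp
  have hcarleson : π * t - C₀ * t ^ (α + 1) ≤ π * t - t * carlesonEps Ωp x t := by
    rw [rpow_add_one ht.ne']
    nlinarith [hε x hx t ht ht']
  obtain ⟨hint, hext⟩ := pi_mul_sub_le_maxArcMeasure Ωp x ht
  have hnotMem : ∀ y ∈ frontier Ωp, y ∉ Ωp ∧ y ∉ (closure Ωp)ᶜ := fun y hy => by
    rw [hΩ.1.frontier_eq] at hy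
    exact ⟨hy.2, not_not.2 hy.1⟩
  have hθ₀ : 0 ≤ t * angle (v - x) (w - x) := mul_nonneg ht.le (angle_nonneg _ _)
  have hθπ : t * angle (v - x) (w - x) ≤ π * t := by
    nlinarith [angle_le_pi (v - x) (w - x)]
  rcases le_mul_angle_or_mul_angle_le_of_le_maxArcMeasure ht hv.1 hw.1
    (disjoint_compl_right.mono_left subset_closure) (hnotMem v hv.2).1 (hnotMem w hw.2).1 (hnotMem v hv.2).2 (hnotMem w hw.2).2
    (hcarleson.trans hint) (hcarleson.trans hext) with h | h
  · exact .inr ⟨h, hθπ⟩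
  · exact .inl ⟨hθ₀, by linarith⟩

/-- Trapped Boundary Lemma: for `v, w ∈ ∂B(x,t) ∩ Γ`, the length of the shortest arc of
`∂B(x,t)` joining `v` and `w` (namely `t` times the angle `∠(v-x, w-x)`) lies in
`[0, 2C₀ t^{α+1}] ∪ [πt - C₀ t^{α+1}, πt]`. -/
theorem trapped_boundary (Ωp : Set E2) (hΩ : IsJordanDomain Ωp)
    (Ωm : Set E2) (hΩm : Ωm = (closure Ωp)ᶜ)
    (Γ : Set E2) (hΓp : Γ = frontier Ωp) (hΓm : Γ = frontier Ωm)
    (α C₀ : ℝ) (hα : α ∈ Set.Ioo (0 : ℝ) 1) (hC₀ : 0 < C₀)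
    (r₀ : ℝ) (hr₀ : 0 < r₀)
    (hε : ∀ x ∈ Γ, ∀ r : ℝ, 0 < r → r ≤ r₀ → carlesonEps Ωp x r ≤ C₀ * r ^ α)
    (x : E2) (hx : x ∈ Γ) (t : ℝ) (ht : 0 < t) (ht' : t ≤ r₀)
    (v w : E2) (hv : v ∈ Metric.sphere x t ∩ Γ) (hw : w ∈ Metric.sphere x t ∩ Γ) :
    t * InnerProductGeometry.angle (v - x) (w - x) ∈
      Set.Icc 0 (2 * C₀ * t ^ (α + 1)) ∪
        Set.Icc (Real.pi * t - C₀ * t ^ (α + 1)) (Real.pi * t) :=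
  trapped_boundary_general Ωp hΩ Γ hΓp α C₀ r₀ hε x hx t ht ht' v w hv hw
end
end

section
/- (Triangle Lemma, abstract form) Fix α ∈ (0,1) and constants C₀, C₁ > 0. Let a, b, c ∈ ℝ² be the vertices of an isosceles triangle with s' := |a − b| = |c − b| > 0 and base length s'' := |a − c| > 0, and suppose |s' − s''/2| < C₀²·(s'')^{α+1} and the base angle θ at a (equal to the base angle at c) satisfies θ < C₁·(s'')^{α/2}. Fix m ∈ ℕ and 1 ≤ n ≤ 2^m − 1, and let x = a + (n/2^m)(c − a) be the n-th dyadic point of level m on the base [a,c]. Then: (i) if n < 2^{m−1} and w = a + (n/2^{m−1})·(b − a)/|b − a|·s' is the n-th dyadic point of level m−1 on the leg [a,b], then |x − w| < C₁·(n/2^{m−1})·s'·(s'')^{α/2} + (n/2^{m−1})·C₀²·(s'')^{α+1}; (ii) if n > 2^{m−1} and d = n − 2^{m−1} and w' = b + (d/2^{m−1})(c − b) is the d-th dyadic point of level m−1 on the leg [b,c], then |x − w'| < C₁·(1 − d/2^{m−1})·s'·(s'')^{α/2} + (1 − d/2^{m−1})·C₀²·(s'')^{α+1}. -/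
open Set Metric InnerProductGeometry

noncomputable section

open scoped RealInnerProductSpace

lemma unit_norm_sub_le_angle (u v : E2) (hu : ‖u‖ = 1) (hv : ‖v‖ = 1) :
    ‖u - v‖ ≤ angle u v := by
  have hcos : Real.cos (angle u v) = ⟪u, v⟫ := by
    rw [cos_angle, hu, hv]; ring
  have hsq : ‖u - v‖ ^ 2 = 2 - 2 * Real.cos (angle u v) := by
    rw [hcos, @norm_sub_sq_real, hu, hv]; ring
  have hb : 1 - (angle u v) ^ 2 / 2 ≤ Real.cos (angle u v) :=
    Real.one_sub_sq_div_two_le_cos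
  have h0 : 0 ≤ angle u v := angle_nonneg u v
  nlinarith [norm_nonneg (u - v)]

lemma key_est (u v : E2) (hu : u ≠ 0) (hv : v ≠ 0) :
    ‖u - (1/2 : ℝ) • v‖ ≤ ‖u‖ * angle u v + |‖u‖ - ‖v‖ / 2| := by
  have hnu : (0:ℝ) < ‖u‖ := norm_pos_iff.2 hu
  have hnv : (0:ℝ) < ‖v‖ := norm_pos_iff.2 hv
  set u1 := ‖u‖⁻¹ • u with hu1
  set v1 := ‖v‖⁻¹ • v with hv1
  have hu1n : ‖u1‖ = 1 := by
    rw [hu1, norm_smul]; simp [abs_of_pos (inv_pos.2 hnu), inv_mul_cancel₀ hnu.ne']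
  have hv1n : ‖v1‖ = 1 := by
    rw [hv1, norm_smul]; simp [abs_of_pos (inv_pos.2 hnv), inv_mul_cancel₀ hnv.ne']
  have hdecomp : u - (1/2 : ℝ) • v = ‖u‖ • (u1 - v1) + (‖u‖ - ‖v‖/2) • v1 := by
    rw [hu1, hv1]
    match_scalars <;> field_simp <;> ring
  have hang : angle u1 v1 = angle u v := by
    rw [hu1, hv1, angle_smul_left_of_pos _ _ (inv_pos.2 hnu),
      angle_smul_right_of_pos _ _ (inv_pos.2 hnv)]
  calc ‖u - (1/2:ℝ) • v‖ ≤ ‖‖u‖ • (u1 - v1)‖ + ‖(‖u‖ - ‖v‖/2) • v1‖ := by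
        rw [hdecomp]; exact norm_add_le _ _
    _ ≤ ‖u‖ * angle u v + |‖u‖ - ‖v‖/2| := by
        rw [norm_smul, norm_smul, hv1n, mul_one, Real.norm_eq_abs, Real.norm_eq_abs,
          abs_of_pos hnu]
        gcongr
        rw [← hang]; exact unit_norm_sub_le_angle _ _ hu1n hv1n

/-- Triangle Lemma (abstract form): for an isosceles triangle `a b c` with legs
`s' = |a-b| = |c-b|`, base `s'' = |a-c|`, `|s' - s''/2| < C₀² (s'')^{α+1}` and small equal base
angles `θ < C₁ (s'')^{α/2}`, any dyadic point `x = a + (n/2^m)(c-a)` of level `m` on the base is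
close to the corresponding dyadic point of level `m-1` on the adjacent leg. -/
theorem triangle_lemma (α C₀ C₁ : ℝ) (hα : α ∈ Set.Ioo (0 : ℝ) 1)
    (hC₀ : 0 < C₀) (hC₁ : 0 < C₁)
    (a b c : E2)
    (hleg : dist a b = dist c b) (hlegpos : 0 < dist a b) (hbasepos : 0 < dist a c)
    (hside : |dist a b - dist a c / 2| < C₀ ^ 2 * dist a c ^ (α + 1))
    (hangle_eq : angle (c - a) (b - a) = angle (a - c) (b - c))
    (hangle : angle (c - a) (b - a) < C₁ * dist a c ^ (α / 2))
    (m n : ℕ) (hn1 : 1 ≤ n) (hn2 : n ≤ 2 ^ m - 1) :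
    -- (i) if `n < 2^{m-1}`, compare with the `n`-th dyadic point of level `m-1` on `[a,b]`
    (n < 2 ^ (m - 1) →
      dist (a + ((n : ℝ) / 2 ^ m) • (c - a))
          (a + (((n : ℝ) / 2 ^ (m - 1)) * dist a b / ‖b - a‖) • (b - a))
        < C₁ * ((n : ℝ) / 2 ^ (m - 1)) * dist a b * dist a c ^ (α / 2)
          + ((n : ℝ) / 2 ^ (m - 1)) * C₀ ^ 2 * dist a c ^ (α + 1)) ∧
    -- (ii) if `n > 2^{m-1}`, compare with the `d`-th dyadic point of level `m-1` on `[b,c]`,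
    -- where `d = n - 2^{m-1}`
    (2 ^ (m - 1) < n →
      dist (a + ((n : ℝ) / 2 ^ m) • (c - a))
          (b + (((n - 2 ^ (m - 1) : ℕ) : ℝ) / 2 ^ (m - 1)) • (c - b))
        < C₁ * (1 - ((n - 2 ^ (m - 1) : ℕ) : ℝ) / 2 ^ (m - 1)) * dist a b * dist a c ^ (α / 2)
          + (1 - ((n - 2 ^ (m - 1) : ℕ) : ℝ) / 2 ^ (m - 1)) * C₀ ^ 2 * dist a c ^ (α + 1)) := by
  have hm : 1 ≤ m := by
    rcases Nat.eq_zero_or_pos m with h | h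
    · subst h; norm_num at hn2; omega
    · exact h
  have hpown : (2:ℕ) ^ m = 2 * 2 ^ (m - 1) := by
    conv_lhs => rw [show m = m - 1 + 1 by omega]
    rw [pow_succ]; ring
  have hpowr : (2:ℝ) ^ m = 2 * 2 ^ (m - 1) := by
    exact_mod_cast congrArg (Nat.cast : ℕ → ℝ) hpown
  have hkpos : (0:ℝ) < 2 ^ (m - 1) := by positivity
  have hba : b - a ≠ 0 := by
    intro h; rw [sub_eq_zero] at h; subst h; simp at hlegpos
  have hca : c - a ≠ 0 := by
    intro h; rw [sub_eq_zero] at h; subst h; simp at hbasepos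
  have hbc : b - c ≠ 0 := by
    intro h; rw [sub_eq_zero] at h; subst h
    simp at hleg
    subst hleg; simp at hlegpos
  have hac : a - c ≠ 0 := by
    intro h; rw [sub_eq_zero] at h; subst h; simp at hbasepos
  have hnba : ‖b - a‖ = dist a b := (dist_eq_norm' a b).symm
  have hnca : ‖c - a‖ = dist a c := (dist_eq_norm' a c).symm
  have hnbc : ‖b - c‖ = dist a b := by rw [← dist_eq_norm' c b, ← hleg]
  have hnac : ‖a - c‖ = dist a c := (dist_eq_norm a c).symm
  have hθ0 : 0 ≤ angle (c - a) (b - a) := angle_nonneg _ _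
  have harith : dist a b * angle (c - a) (b - a) + |dist a b - dist a c / 2|
      < C₁ * dist a b * dist a c ^ (α / 2) + C₀ ^ 2 * dist a c ^ (α + 1) := by
    nlinarith [mul_lt_mul_of_pos_left hangle hlegpos]
  constructor
  · -- case (i)
    intro hlt
    set t : ℝ := (n : ℝ) / 2 ^ (m - 1) with htdef
    have ht : 0 < t := by
      apply div_pos _ hkpos
      exact_mod_cast hn1
    have hbanz : ‖b - a‖ ≠ 0 := norm_ne_zero_iff.2 hba
    have hhalf : (n : ℝ) / 2 ^ m = t / 2 := by
      rw [htdef, hpowr, div_div, mul_comm]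
    have hcoef : t * dist a b / ‖b - a‖ = t := by
      rw [← hnba, mul_div_assoc, div_self hbanz, mul_one]
    have hveq : (a + ((n : ℝ) / 2 ^ m) • (c - a))
        - (a + (t * dist a b / ‖b - a‖) • (b - a))
        = (-t) • ((b - a) - (1/2 : ℝ) • (c - a)) := by
      rw [hhalf, hcoef]
      module
    have hKey := key_est (b - a) (c - a) hba hca
    rw [angle_comm, hnba, hnca] at hKey
    calc dist (a + ((n : ℝ) / 2 ^ m) • (c - a))
          (a + (t * dist a b / ‖b - a‖) • (b - a))
        = ‖(-t) • ((b - a) - (1/2 : ℝ) • (c - a))‖ := by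
          rw [dist_eq_norm, hveq]
      _ = t * ‖(b - a) - (1/2 : ℝ) • (c - a)‖ := by
          rw [norm_smul, Real.norm_eq_abs, abs_neg, abs_of_pos ht]
      _ ≤ t * (dist a b * angle (c - a) (b - a) + |dist a b - dist a c / 2|) :=
          mul_le_mul_of_nonneg_left hKey ht.le
      _ < t * (C₁ * dist a b * dist a c ^ (α / 2) + C₀ ^ 2 * dist a c ^ (α + 1)) :=
          (mul_lt_mul_iff_right₀ ht).2 harith
      _ = C₁ * t * dist a b * dist a c ^ (α / 2) + t * C₀ ^ 2 * dist a c ^ (α + 1) := by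
          ring
  · -- case (ii)
    intro hgt
    set d : ℕ := n - 2 ^ (m - 1) with hddef
    have hdlt : d < 2 ^ (m - 1) := by
      have h1 : n < 2 ^ m := lt_of_le_of_lt hn2 (Nat.sub_lt (by positivity) one_pos)
      rw [hpown] at h1
      omega
    have hdc : (d : ℝ) = (n : ℝ) - 2 ^ (m - 1) := by
      rw [hddef]
      push_cast [Nat.sub_add_cancel hgt.le, Nat.cast_sub hgt.le]
      ring
    have hncast : (n : ℝ) = 2 ^ (m - 1) + (d : ℝ) := by rw [hdc]; ring
    set s : ℝ := 1 - (d : ℝ) / 2 ^ (m - 1) with hsdef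
    have hs : 0 < s := by
      rw [hsdef, sub_pos, div_lt_one hkpos]
      exact_mod_cast hdlt
    have hcoef1 : (n : ℝ) / 2 ^ m = 1 - s / 2 := by
      rw [hsdef, hpowr, hncast]; field_simp; ring
    have hcoef2 : (d : ℝ) / 2 ^ (m - 1) = 1 - s := by
      rw [hsdef]; ring
    have hveq : (a + ((n : ℝ) / 2 ^ m) • (c - a))
        - (b + ((d : ℝ) / 2 ^ (m - 1)) • (c - b))
        = (-s) • ((b - c) - (1/2 : ℝ) • (a - c)) := by
      rw [hcoef1, hcoef2]
      module
    have hKey := key_est (b - c) (a - c) hbc hac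
    rw [angle_comm, ← hangle_eq, hnbc, hnac] at hKey
    calc dist (a + ((n : ℝ) / 2 ^ m) • (c - a))
          (b + ((d : ℝ) / 2 ^ (m - 1)) • (c - b))
        = ‖(-s) • ((b - c) - (1/2 : ℝ) • (a - c))‖ := by
          rw [dist_eq_norm, hveq]
      _ = s * ‖(b - c) - (1/2 : ℝ) • (a - c)‖ := by
          rw [norm_smul, Real.norm_eq_abs, abs_neg, abs_of_pos hs]
      _ ≤ s * (dist a b * angle (c - a) (b - a) + |dist a b - dist a c / 2|) :=
          mul_le_mul_of_nonneg_left hKey hs.le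
      _ < s * (C₁ * dist a b * dist a c ^ (α / 2) + C₀ ^ 2 * dist a c ^ (α + 1)) :=
          (mul_lt_mul_iff_right₀ hs).2 harith
      _ = C₁ * s * dist a b * dist a c ^ (α / 2) + s * C₀ ^ 2 * dist a c ^ (α + 1) := by
          ring

end
end
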